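/- Fix d ≥ 1 and 0 < γ < ∞, and let 𝔠 be a collection of star bodies in ℝ^d such that every K ∈ 𝔠 satisfies γ·B^d ⊆ ker(K), 𝔠 is bounded (there exists R < ∞ with K ⊆ R·B^d for all K ∈ 𝔠), and 𝔠 is closed with respect to the radial metric δ. Then every sequence (K_i) of star bodies in 𝔠 has a subsequence that converges in the radial metric δ to a star body K ∈ 𝔠. -/
import Mathlib


open MeasureTheory Metric Set Filter Pointwise

noncomputable section

abbrev Euc (d : ℕ) : Type := EuclideanSpace ℝ (Fin d)

/-- Radial function of a set: `ρ_K(x) = sup {t > 0 : t • x ∈ K}`. -/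
def radialFn {d : ℕ} (K : Set (Euc d)) (x : Euc d) : ℝ :=
  sSup {t : ℝ | 0 < t ∧ t • x ∈ K}

/-- A star body: compact, `0` in the interior, star-shaped about `0`, with radial function
positive and continuous on the unit sphere. -/
def IsStarBody {d : ℕ} (K : Set (Euc d)) : Prop :=
  IsCompact K ∧ (0 : Euc d) ∈ interior K ∧
    (∀ x ∈ K, segment ℝ 0 x ⊆ K) ∧
    (∀ u ∈ sphere (0 : Euc d) 1, 0 < radialFn K u) ∧
    ContinuousOn (radialFn K) (sphere (0 : Euc d) 1)

/-- The kernel of a star body. -/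
def starKernel {d : ℕ} (K : Set (Euc d)) : Set (Euc d) :=
  {x | x ∈ K ∧ ∀ y ∈ K, segment ℝ x y ⊆ K}

/-- Radial metric between star bodies. -/
def radialDist {d : ℕ} (K L : Set (Euc d)) : ℝ :=
  ⨆ u : sphere (0 : Euc d) 1, |radialFn K (u : Euc d) - radialFn L (u : Euc d)|

/-- The adversarial objective `F(K; μ, ν) = E_μ[‖x‖_K] - E_ν[‖x‖_K]`. -/
def Fobj {d : ℕ} (K : Set (Euc d)) (μ ν : Measure (Euc d)) : ℝ :=
  (∫ x, gauge K x ∂μ) - (∫ x, gauge K x ∂ν)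


lemma radialFn_basic {d : ℕ} {K : Set (Euc d)} {γ R : ℝ} (hγ : 0 < γ)
    (hcomp : IsCompact K) (hstar : ∀ x ∈ K, segment ℝ 0 x ⊆ K)
    (hγK : closedBall (0 : Euc d) γ ⊆ K) (hKR : K ⊆ closedBall (0 : Euc d) R)
    {u : Euc d} (hu : ‖u‖ = 1) :
    γ ≤ radialFn K u ∧ radialFn K u ≤ R ∧ (radialFn K u) • u ∈ K ∧
      ∀ t : ℝ, 0 < t → t • u ∈ K → t ≤ radialFn K u := by
  have hbdd : ∀ t ∈ {t : ℝ | 0 < t ∧ t • u ∈ K}, t ≤ R := by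
    rintro t ⟨ht, htK⟩
    have h := hKR htK
    simp only [mem_closedBall, dist_zero_right, norm_smul, hu, mul_one,
      Real.norm_eq_abs] at h
    linarith [le_abs_self t]
  have hBdd : BddAbove {t : ℝ | 0 < t ∧ t • u ∈ K} := ⟨R, hbdd⟩
  have hγmem : γ ∈ {t : ℝ | 0 < t ∧ t • u ∈ K} := by
    refine ⟨hγ, hγK ?_⟩
    simp [mem_closedBall, dist_zero_right, norm_smul, hu, abs_of_pos hγ, Real.norm_eq_abs]
  have h1 : γ ≤ radialFn K u := le_csSup hBdd hγmem
  have h2 : radialFn K u ≤ R := csSup_le ⟨γ, hγmem⟩ hbdd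
  have hint : ∀ t : ℝ, 0 < t → t < radialFn K u → t • u ∈ K := by
    intro t ht htl
    obtain ⟨s, hsmem, hts⟩ := exists_lt_of_lt_csSup ⟨γ, hγmem⟩ htl
    have hs : 0 < s := ht.trans hts
    have : t • u ∈ segment ℝ (0 : Euc d) (s • u) := by
      rw [segment_eq_image]
      refine ⟨t / s, ⟨by positivity, by rw [div_le_one hs]; exact hts.le⟩, ?_⟩
      simp [smul_smul, div_mul_cancel₀ _ hs.ne']
    exact hstar _ hsmem.2 this
  have h3 : (radialFn K u) • u ∈ K := by
    have htend : Tendsto (fun n : ℕ => γ / (n + 2)) atTop (nhds 0) := by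
      apply Tendsto.div_atTop (tendsto_const_nhds)
      exact tendsto_atTop_add_const_right _ _ tendsto_natCast_atTop_atTop
    have hseq : Tendsto (fun n : ℕ => (radialFn K u - γ / (n + 2)) • u) atTop
        (nhds ((radialFn K u) • u)) := by
      apply Tendsto.smul_const
      simpa using tendsto_const_nhds.sub htend
    refine hcomp.isClosed.mem_of_tendsto hseq (Eventually.of_forall fun n => ?_)
    have hn : (0 : ℝ) ≤ n := Nat.cast_nonneg n
    have hlt : γ / (n + 2) < γ := by
      rw [div_lt_iff₀ (by linarith)]
      nlinarith
    have hpos : 0 < γ / ((n : ℝ) + 2) := by positivity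
    exact hint _ (by linarith) (by linarith)
  exact ⟨h1, h2, h3, fun t ht htK => le_csSup hBdd ⟨ht, htK⟩⟩

lemma kernel_shrink {d : ℕ} {K : Set (Euc d)} {γ : ℝ} (hγ : 0 < γ)
    (hker : closedBall (0 : Euc d) γ ⊆ starKernel K)
    {z y : Euc d} (hy : y ∈ K) {h : ℝ} (hh : 0 ≤ h) (hzy : ‖z - y‖ ≤ h) :
    (γ / (γ + h)) • z ∈ K := by
  rcases hh.eq_or_lt with heq | hpos
  · have hzy' : z = y := by
      rw [← sub_eq_zero]
      have : ‖z - y‖ ≤ 0 := by rw [heq]; exact hzy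
      simpa [norm_le_zero_iff] using this
    rw [← heq, add_zero, div_self hγ.ne', one_smul, hzy']
    exact hy
  · set w : Euc d := (γ / h) • (z - y) with hw
    have hwball : w ∈ closedBall (0 : Euc d) γ := by
      rw [mem_closedBall, dist_zero_right, hw, norm_smul, Real.norm_eq_abs,
        abs_of_pos (by positivity)]
      calc γ / h * ‖z - y‖ ≤ γ / h * h :=
              mul_le_mul_of_nonneg_left hzy (by positivity)
          _ = γ := by field_simp
    have hseg := (hker hwball).2 y hy
    have hmem : (γ / (γ + h)) • z ∈ segment ℝ w y := by
      refine ⟨h / (γ + h), γ / (γ + h), by positivity, by positivity, by field_simp; ring, ?_⟩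
      rw [hw, smul_smul]
      have hc : h / (γ + h) * (γ / h) = γ / (γ + h) := by
        field_simp
      rw [hc, ← smul_add, sub_add_cancel]
    exact hseg hmem

lemma radialFn_sub_le_hausdorff {d : ℕ} {K L : Set (Euc d)} {γ R : ℝ} (hγ : 0 < γ)
    (hKc : IsCompact K) (hKstar : ∀ x ∈ K, segment ℝ 0 x ⊆ K)
    (hKγ : closedBall (0 : Euc d) γ ⊆ K) (hKR : K ⊆ closedBall (0 : Euc d) R)
    (hLc : IsCompact L) (hLstar : ∀ x ∈ L, segment ℝ 0 x ⊆ L)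
    (hLker : closedBall (0 : Euc d) γ ⊆ starKernel L) (hLR : L ⊆ closedBall (0 : Euc d) R)
    {u : Euc d} (hu : ‖u‖ = 1) :
    radialFn K u - radialFn L u ≤ (R / γ) * hausdorffDist K L := by
  have hLγ : closedBall (0 : Euc d) γ ⊆ L := fun x hx => (hLker hx).1
  obtain ⟨hK1, hK2, hK3, hK4⟩ := radialFn_basic hγ hKc hKstar hKγ hKR hu
  obtain ⟨hL1, hL2, hL3, hL4⟩ := radialFn_basic hγ hLc hLstar hLγ hLR hu
  set H := hausdorffDist K L with hH
  have hHnn : 0 ≤ H := hausdorffDist_nonneg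
  have hne : EMetric.hausdorffEdist K L ≠ ⊤ :=
    hausdorffEdist_ne_top_of_nonempty_of_bounded ⟨_, hK3⟩ ⟨_, hL3⟩ hKc.isBounded hLc.isBounded
  have hinf : infDist ((radialFn K u) • u) L ≤ H := infDist_le_hausdorffDist_of_mem hK3 hne
  obtain ⟨y, hyL, hyd⟩ := hLc.exists_infDist_eq_dist ⟨_, hL3⟩ ((radialFn K u) • u)
  have hρpos : 0 < radialFn K u := hγ.trans_le hK1
  have hdist : ‖(radialFn K u) • u - y‖ ≤ H := by
    rw [← dist_eq_norm, ← hyd]; exact hinf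
  have hmem := kernel_shrink hγ hLker hyL hHnn hdist
  rw [smul_smul] at hmem
  have hpos : 0 < γ / (γ + H) * radialFn K u := by positivity
  have hle := hL4 _ hpos hmem
  have hγH : 0 < γ + H := by linarith
  have h5 : radialFn K u - radialFn L u ≤ radialFn K u * H / (γ + H) := by
    have he : radialFn K u - γ / (γ + H) * radialFn K u = radialFn K u * H / (γ + H) := by
      field_simp; ring
    linarith [he ▸ sub_le_sub_left hle (radialFn K u)]
  have hR : 0 < R := hγ.trans_le (hK1.trans hK2)
  have h4 : radialFn K u * H / (γ + H) ≤ R * H / γ := by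
    apply div_le_div₀ (by positivity) (mul_le_mul_of_nonneg_right hK2 hHnn) hγ (by linarith)
  calc radialFn K u - radialFn L u ≤ radialFn K u * H / (γ + H) := h5
    _ ≤ R * H / γ := h4
    _ = (R / γ) * H := by ring

lemma radialFn_lip {d : ℕ} {K : Set (Euc d)} {γ R : ℝ} (hγ : 0 < γ)
    (hc : IsCompact K) (hstar : ∀ x ∈ K, segment ℝ 0 x ⊆ K)
    (hker : closedBall (0 : Euc d) γ ⊆ starKernel K)
    (hKR : K ⊆ closedBall (0 : Euc d) R)
    {u v : Euc d} (hu : ‖u‖ = 1) (hv : ‖v‖ = 1) :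
    radialFn K u - radialFn K v ≤ (R ^ 2 / γ) * ‖u - v‖ := by
  have hγK : closedBall (0 : Euc d) γ ⊆ K := fun x hx => (hker hx).1
  obtain ⟨hu1, hu2, hu3, hu4⟩ := radialFn_basic hγ hc hstar hγK hKR hu
  obtain ⟨hv1, hv2, hv3, hv4⟩ := radialFn_basic hγ hc hstar hγK hKR hv
  set a := radialFn K u with ha
  set ε := ‖u - v‖ with hε
  have hR : 0 < R := hγ.trans_le (hu1.trans hu2)
  have hεnn : 0 ≤ ε := norm_nonneg _
  rcases hεnn.eq_or_lt with hε0 | hεpos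
  · have huv : u = v := by
      rw [← sub_eq_zero]
      exact norm_eq_zero.mp hε0.symm
    have hav : a = radialFn K v := by rw [ha, huv]
    rw [hav, ← hε0]
    simp
  · set C := R ^ 2 / γ with hC
    have hCpos : 0 < C := by positivity
    set t := a - C * ε with ht
    rcases le_or_gt t (radialFn K v) with hcase | hcase
    · have : 0 ≤ C * ε := by positivity
      linarith
    · exfalso
      have htγ : γ < t := hv1.trans_lt hcase |>.trans_le' le_rfl
      have htpos : 0 < t := hγ.trans htγ
      have hapos : 0 < a := hγ.trans_le hu1
      set lam := C * ε / a with hlam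
      have hlampos : 0 < lam := by positivity
      have hlamlt : lam < 1 := by
        rw [hlam, div_lt_one hapos]
        linarith
      set w : Euc d := (t / lam) • (v - u) with hw
      have hwnorm : ‖w‖ ≤ γ := by
        rw [hw, norm_smul, Real.norm_eq_abs, abs_of_pos (by positivity), ← norm_sub_rev u v, ← hε]
        have he : t / lam * ε = t * a / C := by
          rw [hlam]; field_simp
        rw [he]
        rw [div_le_iff₀ hCpos, hC]
        have hta' : t ≤ a := by nlinarith [mul_pos hCpos hεpos]
        have hta : t * a ≤ R * R := mul_le_mul (hta'.trans hu2) hu2 hapos.le hR.le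
        calc t * a ≤ R * R := hta
          _ = γ * (R ^ 2 / γ) := by field_simp
      have hwball : w ∈ closedBall (0 : Euc d) γ := by
        rwa [mem_closedBall, dist_zero_right]
      have hseg := (hker hwball).2 (a • u) hu3
      have htv : t • v ∈ K := by
        apply hseg
        refine ⟨lam, 1 - lam, hlampos.le, by linarith, by ring, ?_⟩
        rw [hw, smul_smul]
        have hc1 : lam * (t / lam) = t := by field_simp
        rw [hc1, smul_smul]
        have hc2 : (1 - lam) * a = t := by
          rw [hlam, ht]; field_simp
        rw [hc2, smul_sub, sub_add_cancel]
      linarith [hv4 t htpos htv]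

lemma radialFn_contOn {d : ℕ} {K : Set (Euc d)} {γ R : ℝ} (hγ : 0 < γ)
    (hc : IsCompact K) (hstar : ∀ x ∈ K, segment ℝ 0 x ⊆ K)
    (hker : closedBall (0 : Euc d) γ ⊆ starKernel K)
    (hKR : K ⊆ closedBall (0 : Euc d) R) :
    ContinuousOn (radialFn K) (sphere (0 : Euc d) 1) := by
  have : LipschitzOnWith (Real.toNNReal (R ^ 2 / γ)) (radialFn K) (sphere (0 : Euc d) 1) := by
    rw [lipschitzOnWith_iff_dist_le_mul]
    intro x hx y hy
    have hx' : ‖x‖ = 1 := by rwa [mem_sphere_zero_iff_norm] at hx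
    have hy' : ‖y‖ = 1 := by rwa [mem_sphere_zero_iff_norm] at hy
    rw [Real.dist_eq, dist_eq_norm, Real.coe_toNNReal _ (by positivity)]
    rw [abs_sub_le_iff]
    constructor
    · exact radialFn_lip hγ hc hstar hker hKR hx' hy'
    · rw [norm_sub_rev]
      exact radialFn_lip hγ hc hstar hker hKR hy' hx'
  exact this.continuousOn

/-- Blaschke-type selection theorem for star bodies: a closed and bounded
collection of star bodies whose kernels contain `γ·B^d` is sequentially compact in the
radial metric. -/
theorem starBody_selection_theorem {d : ℕ} (hd : 1 ≤ d) (γ : ℝ) (hγ : 0 < γ)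
    (𝔠 : Set (Set (Euc d)))
    (h𝔠star : ∀ K ∈ 𝔠, IsStarBody K ∧ closedBall (0 : Euc d) γ ⊆ starKernel K)
    (h𝔠bdd : ∃ R : ℝ, ∀ K ∈ 𝔠, K ⊆ closedBall (0 : Euc d) R)
    (h𝔠closed : ∀ (Ki : ℕ → Set (Euc d)), (∀ i, Ki i ∈ 𝔠) →
      ∀ K : Set (Euc d), IsStarBody K →
        Tendsto (fun i => radialDist (Ki i) K) atTop (nhds 0) → K ∈ 𝔠)
    (Ki : ℕ → Set (Euc d)) (hKi : ∀ i, Ki i ∈ 𝔠) :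
    ∃ φ : ℕ → ℕ, StrictMono φ ∧ ∃ K ∈ 𝔠, IsStarBody K ∧
      Tendsto (fun n => radialDist (Ki (φ n)) K) atTop (nhds 0) := by
  classical
  obtain ⟨R₀, hR₀⟩ := h𝔠bdd
  set R := max R₀ γ with hRdef
  have hγR : γ ≤ R := le_max_right _ _
  have hRpos : 0 < R := hγ.trans_le hγR
  have hKR : ∀ i, Ki i ⊆ closedBall (0 : Euc d) R := fun i =>
    (hR₀ _ (hKi i)).trans (closedBall_subset_closedBall (le_max_left _ _))
  -- facts on each Ki
  have hKic : ∀ i, IsCompact (Ki i) := fun i => (h𝔠star _ (hKi i)).1.1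
  have hKistar : ∀ i, ∀ x ∈ Ki i, segment ℝ 0 x ⊆ Ki i := fun i => (h𝔠star _ (hKi i)).1.2.2.1
  have hKiker : ∀ i, closedBall (0 : Euc d) γ ⊆ starKernel (Ki i) := fun i =>
    (h𝔠star _ (hKi i)).2
  have hKiγ : ∀ i, closedBall (0 : Euc d) γ ⊆ Ki i := fun i x hx => (hKiker i hx).1
  have hKi0 : ∀ i, (0 : Euc d) ∈ Ki i := fun i =>
    interior_subset (h𝔠star _ (hKi i)).1.2.1
  -- unit sphere is nonempty
  have he : ‖(EuclideanSpace.single (⟨0, hd⟩ : Fin d) (1 : ℝ) : Euc d)‖ = 1 := by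
    rw [EuclideanSpace.norm_single]; norm_num
  haveI hsne : Nonempty (sphere (0 : Euc d) 1) :=
    ⟨⟨_, by rwa [mem_sphere_zero_iff_norm]⟩⟩
  -- work in the compact subtype
  haveI : CompactSpace (closedBall (0 : Euc d) R) :=
    isCompact_iff_compactSpace.mp (isCompact_closedBall _ _)
  have h0R : (0 : Euc d) ∈ closedBall (0 : Euc d) R := mem_closedBall_self hRpos.le
  set S : ℕ → Set (closedBall (0 : Euc d) R) :=
    fun i => Subtype.val ⁻¹' (Ki i) with hS
  have hScomp : ∀ i, IsCompact (S i) := fun i =>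
    ((hKic i).isClosed.preimage continuous_subtype_val).isCompact
  have hSne : ∀ i, (S i).Nonempty := fun i => ⟨⟨0, h0R⟩, hKi0 i⟩
  have hSimg : ∀ i, Subtype.val '' (S i) = Ki i := by
    intro i
    rw [hS, Subtype.image_preimage_coe]
    exact inter_eq_right.mpr (hKR i)
  set Ki' : ℕ → TopologicalSpace.NonemptyCompacts (closedBall (0 : Euc d) R) :=
    fun i => ⟨⟨S i, hScomp i⟩, hSne i⟩ with hKi'
  obtain ⟨L, -, φ, hφ, hconv⟩ := isCompact_univ.tendsto_subseq (fun n => mem_univ (Ki' n))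
  set K : Set (Euc d) := Subtype.val '' (L : Set (closedBall (0 : Euc d) R)) with hK
  -- Hausdorff distance convergence
  have hdisteq : ∀ n, hausdorffDist (Ki (φ n)) K = dist (Ki' (φ n)) L := by
    intro n
    rw [Metric.NonemptyCompacts.dist_eq, ← hSimg (φ n), hK,
      hausdorffDist_image isometry_subtype_coe]
    rfl
  have hH0 : Tendsto (fun n => hausdorffDist (Ki (φ n)) K) atTop (nhds 0) := by
    simp only [hdisteq]
    exact tendsto_iff_dist_tendsto_zero.mp hconv
  -- basic properties of K
  have hKne : K.Nonempty := L.nonempty.image _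
  have hKcomp : IsCompact K := L.isCompact.image continuous_subtype_val
  have hKclosed : IsClosed K := hKcomp.isClosed
  have hKRsub : K ⊆ closedBall (0 : Euc d) R := by
    rintro x ⟨y, -, rfl⟩; exact y.2
  have hedist : ∀ n, EMetric.hausdorffEdist (Ki (φ n)) K ≠ ⊤ := fun n =>
    hausdorffEdist_ne_top_of_nonempty_of_bounded ⟨0, hKi0 _⟩ hKne
      (hKic _).isBounded hKcomp.isBounded
  -- kernel property of K
  have hkerK : ∀ x ∈ closedBall (0 : Euc d) γ, ∀ y ∈ K, segment ℝ x y ⊆ K := by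
    intro x hx y hy z hz
    obtain ⟨a, b, ha, hb, hab, rfl⟩ := hz
    have hb1 : b ≤ 1 := by linarith
    have key : ∀ n, infDist (a • x + b • y) K ≤ 2 * hausdorffDist (Ki (φ n)) K := by
      intro n
      set Hn := hausdorffDist (Ki (φ n)) K with hHn
      have hHnn : 0 ≤ Hn := hausdorffDist_nonneg
      have hyinf : infDist y (Ki (φ n)) ≤ Hn := by
        rw [hHn, hausdorffDist_comm]
        exact infDist_le_hausdorffDist_of_mem hy (by rw [EMetric.hausdorffEdist_comm]; exact hedist n)
      obtain ⟨yn, hynK, hynd⟩ := (hKic (φ n)).exists_infDist_eq_dist ⟨0, hKi0 _⟩ y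
      have hdyyn : dist y yn ≤ Hn := by rw [← hynd]; exact hyinf
      have hzn : a • x + b • yn ∈ Ki (φ n) := by
        have := (hKiker (φ n) hx).2 yn hynK
        exact this ⟨a, b, ha, hb, hab, rfl⟩
      have hzninf : infDist (a • x + b • yn) K ≤ Hn :=
        infDist_le_hausdorffDist_of_mem hzn (hedist n)
      have hdzz : dist (a • x + b • y) (a • x + b • yn) ≤ Hn := by
        rw [dist_add_left, dist_smul₀, Real.norm_eq_abs, abs_of_nonneg hb]
        calc b * dist y yn ≤ 1 * dist y yn :=
              mul_le_mul_of_nonneg_right hb1 dist_nonneg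
          _ = dist y yn := one_mul _
          _ ≤ Hn := hdyyn
      calc infDist (a • x + b • y) K
          ≤ infDist (a • x + b • yn) K + dist (a • x + b • y) (a • x + b • yn) :=
            infDist_le_infDist_add_dist
        _ ≤ Hn + Hn := add_le_add hzninf hdzz
        _ = 2 * Hn := by ring
    have hle : infDist (a • x + b • y) K ≤ 0 :=
      ge_of_tendsto (by simpa using hH0.const_mul 2) (Eventually.of_forall key)
    exact (hKclosed.mem_iff_infDist_zero hKne).mpr (le_antisymm hle infDist_nonneg)
  have hγK : closedBall (0 : Euc d) γ ⊆ K := by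
    intro x hx
    obtain ⟨y, hy⟩ := hKne
    exact hkerK x hx y hy (left_mem_segment ℝ x y)
  have hstarK : ∀ x ∈ K, segment ℝ 0 x ⊆ K := fun x hx =>
    hkerK 0 (mem_closedBall_self hγ.le) x hx
  have hkerK' : closedBall (0 : Euc d) γ ⊆ starKernel K := fun x hx =>
    ⟨hγK hx, fun y hy => hkerK x hx y hy⟩
  have h0int : (0 : Euc d) ∈ interior K :=
    interior_maximal (ball_subset_closedBall.trans hγK) isOpen_ball (mem_ball_self hγ)
  have hKstarBody : IsStarBody K := by
    refine ⟨hKcomp, h0int, hstarK, fun u hu => ?_, radialFn_contOn hγ hKcomp hstarK hkerK' hKRsub⟩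
    have hu' : ‖u‖ = 1 := by rwa [mem_sphere_zero_iff_norm] at hu
    exact hγ.trans_le (radialFn_basic hγ hKcomp hstarK hγK hKRsub hu').1
  -- radial convergence
  have hradle : ∀ n, radialDist (Ki (φ n)) K ≤ (R / γ) * hausdorffDist (Ki (φ n)) K := by
    intro n
    refine ciSup_le fun u => ?_
    have hu' : ‖(u : Euc d)‖ = 1 := by
      have := u.2; rwa [mem_sphere_zero_iff_norm] at this
    rw [abs_sub_le_iff]
    constructor
    · exact radialFn_sub_le_hausdorff hγ (hKic _) (hKistar _) (hKiγ _) (hKR _)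
        hKcomp hstarK hkerK' hKRsub hu'
    · rw [hausdorffDist_comm]
      exact radialFn_sub_le_hausdorff hγ hKcomp hstarK hγK hKRsub
        (hKic _) (hKistar _) (hKiker _) (hKR _) hu'
  have hradconv : Tendsto (fun n => radialDist (Ki (φ n)) K) atTop (nhds 0) := by
    refine squeeze_zero (fun n => ?_) hradle (by simpa using hH0.const_mul (R / γ))
    exact Real.iSup_nonneg fun u => abs_nonneg _
  exact ⟨φ, hφ, K, h𝔠closed _ (fun n => hKi (φ n)) K hKstarBody hradconv, hKstarBody, hradconv⟩
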